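/- arXiv:1201.6061 — 5 statements merged into one kernel-verified Lean document; each statement's English description precedes it below -/
import Mathlib

section
/- For n ≥ 3, the determinant of the n×n circulant matrix P = circ(P₁, P₂, ..., Pₙ) satisfies det(P) = (P₁ - Pₙ₊₁)^{n-2}(P₁ - 2Pₙ) + Σ_{k=2}^{n-1} P_{k-1} Pₙ^{n-k} (P₁ - Pₙ₊₁)^{k-2}, where Pₖ is the k-th Pell number. -/
def pell : ℕ → ℚ
  | 0 => 0
  | 1 => 1
  | n + 2 => 2 * pell (n + 1) + pell n

def pellLucas : ℕ → ℚ
  | 0 => 2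
  | 1 => 2
  | n + 2 => 2 * pellLucas (n + 1) + pellLucas n

/-- Circulant matrix `circ (c₁, …, cₙ)` with `(i,j)` entry `c ((j - i mod n) + 1)`. -/
def circMat (n : ℕ) (c : ℕ → ℚ) : Matrix (Fin n) (Fin n) ℚ :=
  fun i j => c ((j - i : Fin n).val + 1)

/-!
For a sequence with `c (k + 2) = p * c (k + 1) + q * c k`, subtracting `p` times row `i + 1` and
`q` times row `i + 2` from row `i` of `circ (c₁, …, cₙ)`, for every `i < n - 2`, is a unimodular
row operation. The recurrence kills all entries of the new row except `c₁ - cₙ₊₁` on the diagonal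
and `q (c₀ - cₙ)` just right of it, while the last two rows are untouched. The determinant of such
a bidiagonal matrix bordered by two arbitrary rows is found by expanding along the first column:
deleting the first row leaves a matrix of the same shape, deleting a border row leaves a
triangular one.
-/

open Matrix Finset

section BorderedBidiagonal

variable {R : Type*} [CommRing R]

def borderedBidiagonal (m : ℕ) (x y : R) (a b : ℕ → R) : Matrix (Fin (m + 2)) (Fin (m + 2)) R :=
  Matrix.of fun i j =>
    if i.val < m then (if j.val = i.val then x else if j.val = i.val + 1 then y else 0)
    else if i.val = m then a j else b j

lemma borderedBidiagonal_submatrix_succ_succ (m : ℕ) (x y : R) (a b : ℕ → R) :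
    (borderedBidiagonal (m + 1) x y a b).submatrix Fin.succ Fin.succ =
      borderedBidiagonal m x y (fun j => a (j + 1)) (fun j => b (j + 1)) := by
  ext i j
  simp only [borderedBidiagonal, submatrix_apply, of_apply, Fin.val_succ]
  split_ifs <;> first | rfl | omega

lemma det_borderedBidiagonal_submatrix_succAbove_succ (m : ℕ) (x y : R) (a b : ℕ → R)
    (i : Fin (m + 3)) (hi : m + 1 ≤ i.val) :
    ((borderedBidiagonal (m + 1) x y a b).submatrix i.succAbove Fin.succ).det =
      y ^ (m + 1) * if i.val = m + 1 then b (m + 2) else a (m + 2) := by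
  have hval : ∀ r : Fin (m + 2),
      (i.succAbove r).val = if r.val < i.val then r.val else r.val + 1 := by
    intro r
    simp only [Fin.succAbove, Fin.lt_def, Fin.val_castSucc]
    split_ifs <;> simp
  rw [det_of_isLowerTriangular, Fin.prod_univ_castSucc]
  · congr 1
    · have hdiag : ∀ r : Fin (m + 1),
          ((borderedBidiagonal (m + 1) x y a b).submatrix i.succAbove Fin.succ) r.castSucc
            r.castSucc = y := by
        intro r
        simp only [borderedBidiagonal, submatrix_apply, of_apply, hval, Fin.val_succ,
          Fin.val_castSucc]
        have := r.isLt
        split_ifs <;> first | rfl | omega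
      rw [prod_congr rfl fun r _ => hdiag r, prod_const, card_univ, Fintype.card_fin]
    · simp only [borderedBidiagonal, submatrix_apply, of_apply, hval, Fin.val_succ, Fin.val_last]
      split_ifs <;> first | rfl | omega
  · intro r s (hrs : r < s)
    rw [Fin.lt_def] at hrs
    simp only [borderedBidiagonal, submatrix_apply, of_apply, hval, Fin.val_succ]
    have := s.isLt
    split_ifs <;> first | rfl | omega

theorem det_borderedBidiagonal (m : ℕ) (x y : R) (a b : ℕ → R) :
    (borderedBidiagonal m x y a b).det =
      ∑ j ∈ range (m + 1), x ^ j * (-y) ^ (m - j) * (a j * b (m + 1) - a (m + 1) * b j) := by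
  induction m generalizing a b with
  | zero => simp [det_fin_two, borderedBidiagonal]
  | succ m ih =>
    have hsum :
        ∑ j ∈ range (m + 2), x ^ j * (-y) ^ (m + 1 - j) * (a j * b (m + 2) - a (m + 2) * b j) =
          x * ∑ j ∈ range (m + 1),
              x ^ j * (-y) ^ (m - j) * (a (j + 1) * b (m + 2) - a (m + 2) * b (j + 1)) +
            (-y) ^ (m + 1) * (a 0 * b (m + 2) - a (m + 2) * b 0) := by
      rw [sum_range_succ', mul_sum]
      congr 1
      · exact sum_congr rfl fun j _ => by rw [Nat.add_sub_add_right]; ring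
      · simp
    rw [det_succ_column_zero, Fin.sum_univ_succ, Fin.sum_univ_castSucc, Fin.sum_univ_castSucc,
      Fin.succAbove_zero, borderedBidiagonal_submatrix_succ_succ, ih,
      det_borderedBidiagonal_submatrix_succAbove_succ _ _ _ _ _ _ (by simp),
      det_borderedBidiagonal_submatrix_succAbove_succ _ _ _ _ _ _ (by simp), hsum]
    simp [borderedBidiagonal, neg_pow y]
    ring

end BorderedBidiagonal

section Elimination

variable {R : Type*} [CommRing R]

def recurrenceElim (m : ℕ) (p q : R) : Matrix (Fin (m + 2)) (Fin (m + 2)) R :=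
  Matrix.of fun i => if h : i.val < m then
      Pi.single i 1 - p • Pi.single ⟨i.val + 1, by omega⟩ 1 - q • Pi.single ⟨i.val + 2, by omega⟩ 1
    else Pi.single i 1

lemma det_recurrenceElim (m : ℕ) (p q : R) : (recurrenceElim m p q).det = 1 := by
  rw [det_of_isUpperTriangular, prod_eq_one]
  · intro i _
    by_cases hi : i.val < m <;> simp [recurrenceElim, hi, Fin.ext_iff]
  · intro i k (hki : k < i)
    rw [Fin.lt_def] at hki
    by_cases hi : i.val < m <;>
      simp [recurrenceElim, hi, Fin.ext_iff, hki.ne, show k.val ≠ i.val + 1 by omega,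
        show k.val ≠ i.val + 2 by omega]

lemma recurrenceElim_mul_apply_of_lt {m : ℕ} (p q : R) (A : Matrix (Fin (m + 2)) (Fin (m + 2)) R)
    {i : Fin (m + 2)} (hi : i.val < m) (j : Fin (m + 2)) :
    (recurrenceElim m p q * A) i j =
      A i j - p * A ⟨i.val + 1, by omega⟩ j - q * A ⟨i.val + 2, by omega⟩ j := by
  rw [mul_apply_eq_vecMul, show recurrenceElim m p q i = _ from dif_pos hi]
  simp [sub_vecMul, smul_vecMul, single_vecMul]

lemma recurrenceElim_mul_apply_of_le {m : ℕ} (p q : R) (A : Matrix (Fin (m + 2)) (Fin (m + 2)) R)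
    {i : Fin (m + 2)} (hi : m ≤ i.val) (j : Fin (m + 2)) :
    (recurrenceElim m p q * A) i j = A i j := by
  rw [mul_apply_eq_vecMul, show recurrenceElim m p q i = _ from dif_neg hi.not_gt]
  simp [single_vecMul]

end Elimination

def circEntry (n : ℕ) (c : ℕ → ℚ) (i j : ℕ) : ℚ :=
  c (if i ≤ j then j - i + 1 else n + j - i + 1)

lemma circMat_apply {n : ℕ} (c : ℕ → ℚ) (i j : Fin n) : circMat n c i j = circEntry n c i j := by
  unfold circMat circEntry
  split_ifs with h
  · rw [Fin.coe_sub_iff_le.mpr (Fin.le_def.mpr h)]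
  · rw [Fin.coe_sub_iff_lt.mpr (Fin.lt_def.mpr (by omega))]

lemma circEntry_of_le (n : ℕ) (c : ℕ → ℚ) {i j : ℕ} (h : i ≤ j) :
    circEntry n c i j = c (j - i + 1) :=
  congrArg c (if_pos h)

lemma circEntry_of_lt (n : ℕ) (c : ℕ → ℚ) {i j : ℕ} (h : j < i) :
    circEntry n c i j = c (n + j - i + 1) :=
  congrArg c (if_neg h.not_ge)

section Recurrence

variable {c : ℕ → ℚ} {p q : ℚ}

lemma circEntry_sub_recurrence (hc : ∀ k, c (k + 2) = p * c (k + 1) + q * c k) {n i j : ℕ}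
    (hi : i + 2 < n) :
    circEntry n c i j - p * circEntry n c (i + 1) j - q * circEntry n c (i + 2) j =
      if j = i then c 1 - c (n + 1) else if j = i + 1 then q * (c 0 - c n) else 0 := by
  have hzero : ∀ k, c (k + 2) - p * c (k + 1) - q * c k = 0 := fun k => by rw [hc]; ring
  obtain hji | rfl | rfl | hij := show j < i ∨ j = i ∨ j = i + 1 ∨ i + 2 ≤ j by omega
  · rw [circEntry_of_lt _ _ hji, circEntry_of_lt _ _ (by omega), circEntry_of_lt _ _ (by omega),
      if_neg hji.ne, if_neg (by omega)]
    have h := hzero (n + j - (i + 2) + 1)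
    rwa [show n + j - (i + 2) + 1 + 2 = n + j - i + 1 by omega,
      show n + j - (i + 2) + 1 + 1 = n + j - (i + 1) + 1 by omega] at h
  · rw [circEntry_of_le _ _ le_rfl, circEntry_of_lt _ _ (by omega), circEntry_of_lt _ _ (by omega),
      if_pos rfl, show n + 1 = n - 1 + 2 by omega, hc, Nat.sub_self,
      show n + j - (j + 1) + 1 = n by omega, show n + j - (j + 2) + 1 = n - 1 by omega,
      show n - 1 + 1 = n by omega]
    ring
  · rw [circEntry_of_le _ _ (by omega), circEntry_of_le _ _ le_rfl, circEntry_of_lt _ _ (by omega),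
      if_neg (by omega), if_pos rfl, show i + 1 - i + 1 = 0 + 2 by omega, hc, Nat.sub_self,
      show n + (i + 1) - (i + 2) + 1 = n by omega]
    ring
  · rw [circEntry_of_le _ _ (by omega), circEntry_of_le _ _ (by omega), circEntry_of_le _ _ hij,
      if_neg (by omega), if_neg (by omega)]
    have h := hzero (j - (i + 2) + 1)
    rwa [show j - (i + 2) + 1 + 2 = j - i + 1 by omega,
      show j - (i + 2) + 1 + 1 = j - (i + 1) + 1 by omega] at h

lemma recurrenceElim_mul_circMat (hc : ∀ k, c (k + 2) = p * c (k + 1) + q * c k) (m : ℕ) :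
    recurrenceElim m p q * circMat (m + 2) c =
      borderedBidiagonal m (c 1 - c (m + 3)) (q * (c 0 - c (m + 2)))
        (circEntry (m + 2) c m) (circEntry (m + 2) c (m + 1)) := by
  ext i j
  by_cases hi : i.val < m
  · rw [recurrenceElim_mul_apply_of_lt p q _ hi, circMat_apply, circMat_apply, circMat_apply,
      circEntry_sub_recurrence hc (by omega)]
    simp [borderedBidiagonal, hi]
  · rw [recurrenceElim_mul_apply_of_le p q _ (not_lt.mp hi), circMat_apply]
    rcases show i.val = m ∨ i.val = m + 1 by omega with hm | hm <;>
      simp [borderedBidiagonal, hm]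

theorem det_circMat_of_recurrence (hc : ∀ k, c (k + 2) = p * c (k + 1) + q * c k) (m : ℕ) :
    (circMat (m + 2) c).det =
      (c 1 - c (m + 3)) ^ m * (c 1 * c 1 - c 2 * c (m + 2)) +
        ∑ j ∈ range m, (c 1 - c (m + 3)) ^ j * (q * (c (m + 2) - c 0)) ^ (m - j) *
          (c (j + 3) * c 1 - c 2 * c (j + 2)) := by
  rw [← one_mul (circMat (m + 2) c).det, ← det_recurrenceElim m p q, ← det_mul,
    recurrenceElim_mul_circMat hc, det_borderedBidiagonal, sum_range_succ, add_comm,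
    show -(q * (c 0 - c (m + 2))) = q * (c (m + 2) - c 0) by ring]
  congr 1
  · rw [circEntry_of_le _ _ le_rfl, circEntry_of_le _ _ le_rfl, circEntry_of_le _ _ (by omega),
      circEntry_of_lt _ _ (by omega), Nat.sub_self, pow_zero, mul_one, Nat.sub_self,
      show m + 1 - m + 1 = 2 by omega, show m + 2 + m - (m + 1) + 1 = m + 2 by omega]
  · refine sum_congr rfl fun j hj => ?_
    rw [mem_range] at hj
    rw [circEntry_of_le _ _ le_rfl, circEntry_of_le _ _ (m.le_add_right 1), circEntry_of_lt _ _ hj,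
      circEntry_of_lt _ _ (by omega : j < m + 1), Nat.sub_self, show m + 1 - m + 1 = 2 by omega,
      show m + 2 + j - m + 1 = j + 3 by omega, show m + 2 + j - (m + 1) + 1 = j + 2 by omega]

end Recurrence

theorem det_circ_pell (n : ℕ) (hn : 3 ≤ n) :
    (circMat n pell).det =
      (pell 1 - pell (n + 1)) ^ (n - 2) * (pell 1 - 2 * pell n) +
        ∑ k ∈ Finset.Icc 2 (n - 1),
          pell (k - 1) * pell n ^ (n - k) * (pell 1 - pell (n + 1)) ^ (k - 2) := by
  obtain ⟨m, rfl⟩ : ∃ m, n = m + 2 := ⟨n - 2, by omega⟩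
  have hrec : ∀ k, pell (k + 2) = 2 * pell (k + 1) + 1 * pell k := fun k => by rw [one_mul]; rfl
  have hpell0 : pell 0 = 0 := rfl
  have hpell1 : pell 1 = 1 := rfl
  have hpell2 : pell 2 = 2 := by norm_num [pell]
  rw [det_circMat_of_recurrence hrec, ← Ico_add_one_right_eq_Icc, sum_Ico_eq_sum_range,
    show m + 2 - 1 + 1 - 2 = m by omega, Nat.add_sub_cancel, hpell0, hpell1, hpell2]
  congr 1
  · ring
  · refine sum_congr rfl fun j _ => ?_
    rw [show 2 + j - 1 = j + 1 by omega, show m + 2 - (2 + j) = m - j by omega,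
      Nat.add_sub_cancel_left, show pell (j + 3) = 2 * pell (j + 2) + pell (j + 1) from rfl]
    ring
end

section
/- For n ≥ 3, the determinant of the n×n circulant matrix Q = circ(Q₁, Q₂, ..., Qₙ) satisfies det(Q) = 2(2 - Qₙ₊₁)^{n-2}(2 - 3Qₙ) + 2 Σ_{k=2}^{n-1} (Q_{k+1} - 3Qₖ)(Qₙ - 2)^{n-k}(2 - Qₙ₊₁)^{k-2}, where Qₖ is the k-th Pell-Lucas number. -/
open Finset Matrix

lemma pellLucas_add_two (m : ℕ) :
    pellLucas (m + 2) = 2 * pellLucas (m + 1) + pellLucas m := rfl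

lemma two_le_pellLucas : ∀ m, (2 : ℚ) ≤ pellLucas m
  | 0 => le_refl _
  | 1 => le_refl _
  | m + 2 => by
      have h1 := two_le_pellLucas m
      have h2 := two_le_pellLucas (m + 1)
      rw [pellLucas_add_two]; linarith

lemma six_le_pellLucas (m : ℕ) : (6 : ℚ) ≤ pellLucas (m + 2) := by
  have h1 := two_le_pellLucas m
  have h2 := two_le_pellLucas (m + 1)
  rw [pellLucas_add_two]; linarith

lemma fin_sub_val {n : ℕ} (a b : Fin n) : (a - b).val = (n - b.val + a.val) % n := by
  rw [Fin.sub_def]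

lemma mod_twice {s n : ℕ} (h1 : n ≤ s) (h2 : s < 2 * n) : s % n = s - n := by
  rw [Nat.mod_eq_sub_mod h1, Nat.mod_eq_of_lt (by omega)]

/-- row-operation matrix -/
def Mmat (n : ℕ) : Matrix (Fin n) (Fin n) ℚ :=
  fun i j =>
    if i.val < n - 2 then
      if j = i then 1
      else if j.val = i.val + 1 then -2
      else if j.val = i.val + 2 then -1
      else 0
    else if j = i then 1 else 0

/-- column-operation matrix -/
def Pmat (n : ℕ) (t : ℚ) : Matrix (Fin n) (Fin n) ℚ :=
  fun j k => if j.val ≤ k.val then t ^ (k.val - j.val) else 0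

/-- intermediate matrix -/
def Bmat (n : ℕ) : Matrix (Fin n) (Fin n) ℚ :=
  fun i j =>
    if i.val < n - 2 then
      if j = i then 2 - pellLucas (n + 1)
      else if j.val = i.val + 1 then 2 - pellLucas n
      else 0
    else circMat n pellLucas i j

/-- target matrix -/
def Tmat (n : ℕ) (x t : ℚ) : Matrix (Fin n) (Fin n) ℚ :=
  fun i k =>
    if i.val < n - 2 then (if k = i then x else 0)
    else ∑ j : Fin n, circMat n pellLucas i j * Pmat n t j k

lemma det_Mmat (n : ℕ) : (Mmat n).det = 1 := by
  have h : (Mmat n).BlockTriangular id := by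
    intro i j hij
    have h1 : j.val < i.val := hij
    have h2 : j ≠ i := by rw [Fin.ne_iff_vne]; omega
    simp only [Mmat, if_neg h2]
    split_ifs <;> first | rfl | (exfalso; omega)
  rw [Matrix.det_of_upperTriangular h]
  apply Finset.prod_eq_one
  intro i _
  simp [Mmat]

lemma det_Pmat (n : ℕ) (t : ℚ) : (Pmat n t).det = 1 := by
  have h : (Pmat n t).BlockTriangular id := by
    intro j k hjk
    have h1 : k.val < j.val := hjk
    simp only [Pmat]
    rw [if_neg (by omega)]
  rw [Matrix.det_of_upperTriangular h]
  apply Finset.prod_eq_one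
  intro i _
  simp [Pmat]

lemma MA_eq (n : ℕ) (hn : 3 ≤ n) : Mmat n * circMat n pellLucas = Bmat n := by
  have hQ1 : pellLucas 1 = 2 := rfl
  ext i j
  rw [Matrix.mul_apply]
  by_cases hi : i.val < n - 2
  · have hj := j.isLt
    have hil := i.isLt
    trans (∑ v ∈ range n,
      (if v = i.val then (1:ℚ) else if v = i.val + 1 then -2 else if v = i.val + 2 then -1
        else 0) * pellLucas ((n - v + j.val) % n + 1))
    · rw [← Fin.sum_univ_eq_sum_range]
      refine Finset.sum_congr rfl fun k _ => ?_
      simp only [Mmat, circMat, if_pos hi, fin_sub_val, Fin.ext_iff]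
    · rw [← Finset.sum_subset
        (show ({i.val, i.val + 1, i.val + 2} : Finset ℕ) ⊆ range n by
          intro v hv
          simp only [Finset.mem_insert, Finset.mem_singleton] at hv
          simp only [Finset.mem_range]
          omega)
        (by
          intro v _ hvn
          simp only [Finset.mem_insert, Finset.mem_singleton] at hvn
          push_neg at hvn
          rw [if_neg hvn.1, if_neg hvn.2.1, if_neg hvn.2.2, zero_mul])]
      rw [show ({i.val, i.val + 1, i.val + 2} : Finset ℕ)
            = insert i.val (insert (i.val + 1) {i.val + 2}) from rfl]
      rw [Finset.sum_insert (by
            simp only [Finset.mem_insert, Finset.mem_singleton]; omega),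
          Finset.sum_insert (by simp only [Finset.mem_singleton]; omega),
          Finset.sum_singleton]
      have c1 : i.val + 1 ≠ i.val := by omega
      have c2 : i.val + 2 ≠ i.val := by omega
      have c3 : i.val + 2 ≠ i.val + 1 := by omega
      simp only [c1, c2, c3, if_false, eq_self_iff_true, if_true]
      simp only [Bmat, if_pos hi, Fin.ext_iff]
      by_cases h0 : j.val = i.val
      · rw [if_pos h0]
        rw [show n - i.val + j.val = n by omega, Nat.mod_self,
            show n - (i.val + 1) + j.val = n - 1 by omega,
            Nat.mod_eq_of_lt (by omega),
            show n - (i.val + 2) + j.val = n - 2 by omega,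
            Nat.mod_eq_of_lt (by omega)]
        rw [Nat.zero_add, hQ1,
            show n + 1 = (n - 1) + 2 by omega, pellLucas_add_two,
            show n - 1 + 1 = n by omega, show n - 2 + 1 = n - 1 by omega]
        ring
      · by_cases h1 : j.val = i.val + 1
        · rw [if_neg h0, if_pos h1]
          rw [show n - i.val + j.val = n + 1 by omega,
              mod_twice (by omega) (by omega), show n + 1 - n = 1 by omega,
              show n - (i.val + 1) + j.val = n by omega, Nat.mod_self,
              show n - (i.val + 2) + j.val = n - 1 by omega,
              Nat.mod_eq_of_lt (by omega)]
          rw [Nat.zero_add, hQ1, show n - 1 + 1 = n by omega,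
              show (1:ℕ) + 1 = 0 + 2 by omega, pellLucas_add_two,
              show (0:ℕ) + 1 = 1 by omega, hQ1, show pellLucas 0 = 2 from rfl]
          ring
        · rw [if_neg h0, if_neg h1]
          have hs1 : n - (i.val + 1) + j.val = (n - i.val + j.val) - 1 := by omega
          have hs2 : n - (i.val + 2) + j.val = (n - i.val + j.val) - 2 := by omega
          rw [hs1, hs2]
          set s := n - i.val + j.val with hs
          have hd : 2 ≤ s % n ∧ (s - 1) % n = s % n - 1 ∧ (s - 2) % n = s % n - 2 := by
            rcases lt_or_ge s n with h | h
            · rw [Nat.mod_eq_of_lt h, Nat.mod_eq_of_lt (by omega),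
                Nat.mod_eq_of_lt (by omega)]
              omega
            · have hge : n + 2 ≤ s := by omega
              have e1 := mod_twice h (by omega)
              have e2 := mod_twice (show n ≤ s - 1 by omega) (by omega)
              have e3 := mod_twice (show n ≤ s - 2 by omega) (by omega)
              omega
          obtain ⟨hd2, hm1, hm2⟩ := hd
          rw [hm1, hm2]
          rw [show s % n + 1 = (s % n - 1) + 2 by omega, pellLucas_add_two,
              show s % n - 2 + 1 = s % n - 1 by omega]
          ring
  · simp only [Mmat, Bmat, if_neg hi]
    rw [Finset.sum_eq_single i]
    · simp
    · intro k _ hk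
      rw [if_neg hk, zero_mul]
    · intro h
      exact absurd (Finset.mem_univ i) h

lemma BP_eq (n : ℕ) (hn : 3 ≤ n) (t : ℚ)
    (hxt : (2 - pellLucas (n + 1)) * t = pellLucas n - 2) :
    Bmat n * Pmat n t = Tmat n (2 - pellLucas (n + 1)) t := by
  ext i k
  rw [Matrix.mul_apply]
  by_cases hi : i.val < n - 2
  · have hk := k.isLt
    trans (∑ v ∈ range n,
      (if v = i.val then 2 - pellLucas (n + 1) else if v = i.val + 1 then 2 - pellLucas n
        else 0) * (if v ≤ k.val then t ^ (k.val - v) else 0))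
    · rw [← Fin.sum_univ_eq_sum_range]
      refine Finset.sum_congr rfl fun j _ => ?_
      simp only [Bmat, Pmat, if_pos hi, Fin.ext_iff]
    · rw [← Finset.sum_subset
        (show ({i.val, i.val + 1} : Finset ℕ) ⊆ range n by
          intro v hv
          simp only [Finset.mem_insert, Finset.mem_singleton] at hv
          simp only [Finset.mem_range]
          omega)
        (by
          intro v _ hvn
          simp only [Finset.mem_insert, Finset.mem_singleton] at hvn
          push_neg at hvn
          rw [if_neg hvn.1, if_neg hvn.2, zero_mul])]
      rw [show ({i.val, i.val + 1} : Finset ℕ) = insert i.val {i.val + 1} from rfl]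
      rw [Finset.sum_insert (by simp only [Finset.mem_singleton]; omega),
          Finset.sum_singleton]
      have c1 : i.val + 1 ≠ i.val := by omega
      simp only [c1, if_false, eq_self_iff_true, if_true]
      simp only [Tmat, if_pos hi, Fin.ext_iff]
      rcases lt_trichotomy k.val i.val with h | h | h
      · rw [if_neg (by omega), if_neg (by omega), if_neg (by omega)]
        ring
      · rw [if_pos (by omega : i.val ≤ k.val), if_neg (by omega), if_pos (by omega)]
        rw [show k.val - i.val = 0 by omega, pow_zero]
        ring
      · rw [if_pos (by omega : i.val ≤ k.val), if_pos (by omega : i.val + 1 ≤ k.val),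
            if_neg (by omega)]
        rw [show k.val - i.val = (k.val - (i.val + 1)) + 1 by omega, pow_succ]
        calc (2 - pellLucas (n + 1)) * (t ^ (k.val - (i.val + 1)) * t)
              + (2 - pellLucas n) * t ^ (k.val - (i.val + 1))
            = t ^ (k.val - (i.val + 1)) * ((2 - pellLucas (n + 1)) * t + (2 - pellLucas n)) := by
              ring
          _ = 0 := by rw [hxt]; ring
  · simp only [Tmat, Bmat, hi, if_false]

/-- reindexing equivalence -/
def splitEquiv (n : ℕ) (h : n - 2 + 2 = n) : Fin (n - 2) ⊕ Fin 2 ≃ Fin n :=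
  finSumFinEquiv.trans (finCongr h)

lemma det_Tmat (n : ℕ) (hn : 3 ≤ n) (x t : ℚ) :
    (Tmat n x t).det =
      x ^ (n - 2) *
        (Tmat n x t ⟨n - 2, by omega⟩ ⟨n - 2, by omega⟩ *
            Tmat n x t ⟨n - 1, by omega⟩ ⟨n - 1, by omega⟩ -
          Tmat n x t ⟨n - 2, by omega⟩ ⟨n - 1, by omega⟩ *
            Tmat n x t ⟨n - 1, by omega⟩ ⟨n - 2, by omega⟩) := by
  have hsplit : n - 2 + 2 = n := by omega
  set e := splitEquiv n hsplit with he
  have heL : ∀ i : Fin (n - 2), (e (Sum.inl i)).val = i.val := fun i => rfl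
  have heR : ∀ p : Fin 2, (e (Sum.inr p)).val = n - 2 + p.val := fun p => rfl
  rw [← Matrix.det_submatrix_equiv_self e]
  have hblock : (Tmat n x t).submatrix e e =
      Matrix.fromBlocks (x • (1 : Matrix (Fin (n - 2)) (Fin (n - 2)) ℚ)) 0
        (Matrix.of fun p q => Tmat n x t (e (Sum.inr p)) (e (Sum.inl q)))
        (Matrix.of fun p q => Tmat n x t (e (Sum.inr p)) (e (Sum.inr q))) := by
    ext p q
    cases p with
    | inl i =>
      have hi : (e (Sum.inl i)).val < n - 2 := by rw [heL]; exact i.isLt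
      cases q with
      | inl j =>
        simp only [Matrix.submatrix_apply, Matrix.fromBlocks_apply₁₁, Matrix.smul_apply,
          Matrix.one_apply, Tmat, if_pos hi, smul_eq_mul, mul_ite, mul_one, mul_zero]
        by_cases h : i = j
        · subst h
          rw [if_pos rfl, if_pos rfl]
        · rw [if_neg (fun hh => h (Sum.inl.inj (e.injective hh)).symm), if_neg h]
      | inr p' =>
        simp only [Matrix.submatrix_apply, Matrix.fromBlocks_apply₁₂, Matrix.zero_apply,
          Tmat, if_pos hi]
        rw [if_neg]
        intro hh
        have hval := congrArg Fin.val hh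
        rw [heR, heL] at hval
        omega
    | inr p' =>
      cases q with
      | inl j =>
        simp only [Matrix.submatrix_apply, Matrix.fromBlocks_apply₂₁, Matrix.of_apply]
      | inr q' =>
        simp only [Matrix.submatrix_apply, Matrix.fromBlocks_apply₂₂, Matrix.of_apply]
  rw [hblock, Matrix.det_fromBlocks_zero₁₂, Matrix.det_smul, Matrix.det_one, mul_one,
      Matrix.det_fin_two]
  simp only [Matrix.of_apply, Fintype.card_fin]
  have h0 : e (Sum.inr 0) = (⟨n - 2, by omega⟩ : Fin n) := by
    apply Fin.ext
    rw [heR]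
    simp
  have h1 : e (Sum.inr 1) = (⟨n - 1, by omega⟩ : Fin n) := by
    apply Fin.ext
    rw [heR]
    simp
    omega
  rw [h0, h1]

lemma T_bottom (n : ℕ) (x t : ℚ) (r c : Fin n) (hr : ¬ r.val < n - 2) (a b : ℕ)
    (hra : r.val = a) (hcb : c.val = b) :
    Tmat n x t r c =
      ∑ v ∈ range n,
        pellLucas ((n - a + v) % n + 1) * (if v ≤ b then t ^ (b - v) else 0) := by
  simp only [Tmat, hr, if_false]
  rw [← Fin.sum_univ_eq_sum_range]
  refine Finset.sum_congr rfl fun j _ => ?_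
  simp only [circMat, Pmat, fin_sub_val, hra, hcb]

theorem det_circ_pellLucas (n : ℕ) (hn : 3 ≤ n) :
    (circMat n pellLucas).det =
      2 * (2 - pellLucas (n + 1)) ^ (n - 2) * (2 - 3 * pellLucas n) +
        2 * ∑ k ∈ Finset.Icc 2 (n - 1),
          (pellLucas (k + 1) - 3 * pellLucas k) * (pellLucas n - 2) ^ (n - k) *
            (2 - pellLucas (n + 1)) ^ (k - 2) := by
  have hQ1 : pellLucas 1 = 2 := rfl
  have hQ2 : pellLucas 2 = 6 := by
    rw [show (2:ℕ) = 0 + 2 from rfl, pellLucas_add_two]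
    norm_num [show pellLucas 1 = 2 from rfl, show pellLucas 0 = 2 from rfl]
  have hQ6 : (6 : ℚ) ≤ pellLucas (n + 1) := by
    rw [show n + 1 = (n - 1) + 2 by omega]
    exact six_le_pellLucas _
  set x : ℚ := 2 - pellLucas (n + 1) with hxdef
  have hxne : x ≠ 0 := by
    rw [hxdef]
    intro h
    linarith
  set t : ℚ := (pellLucas n - 2) / x with htdef
  have hxt : x * t = pellLucas n - 2 := by
    rw [htdef, mul_comm, div_mul_cancel₀ _ hxne]
  -- split sums helper
  have hpop : ∀ (m : ℕ) (f : ℕ → ℚ), 0 < m →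
      ∑ v ∈ range m, f v = (∑ v ∈ range (m - 1), f v) + f (m - 1) := by
    intro m f hm
    conv_lhs => rw [show m = m - 1 + 1 by omega]
    rw [Finset.sum_range_succ]
  set S1 : ℚ := ∑ v ∈ range (n - 2), pellLucas (v + 3) * t ^ (n - 2 - v) with hS1
  set S3 : ℚ := ∑ v ∈ range (n - 1), pellLucas (v + 2) * t ^ (n - 2 - v) with hS3
  clear_value x t S1 S3
  have hb0 : ¬ ((⟨n - 2, by omega⟩ : Fin n) : Fin n).val < n - 2 := by simp
  have hb1 : ¬ ((⟨n - 1, by omega⟩ : Fin n) : Fin n).val < n - 2 := by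
    simp only [not_lt]
    omega
  -- entry (n-2, n-2)
  have hE00 : Tmat n x t ⟨n - 2, by omega⟩ ⟨n - 2, by omega⟩ = S1 + 2 := by
    rw [T_bottom n x t _ _ hb0 (n - 2) (n - 2) rfl rfl,
        show n - (n - 2) = 2 by omega,
        hpop n _ (by omega), hpop (n - 1) _ (by omega), show n - 1 - 1 = n - 2 by omega]
    rw [if_neg (show ¬ n - 1 ≤ n - 2 by omega), mul_zero, add_zero]
    rw [show 2 + (n - 2) = n by omega, Nat.mod_self, if_pos (le_refl (n - 2)),
        Nat.sub_self, pow_zero, Nat.zero_add, hQ1, mul_one]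
    congr 1
    rw [hS1]
    refine Finset.sum_congr rfl fun v hv => ?_
    simp only [Finset.mem_range] at hv
    rw [Nat.mod_eq_of_lt (by omega), if_pos (by omega), show 2 + v + 1 = v + 3 by omega]
  -- entry (n-2, n-1)
  have hE01 : Tmat n x t ⟨n - 2, by omega⟩ ⟨n - 1, by omega⟩ = S1 * t + 2 * t + 6 := by
    rw [T_bottom n x t _ _ hb0 (n - 2) (n - 1) rfl rfl,
        show n - (n - 2) = 2 by omega,
        hpop n _ (by omega), hpop (n - 1) _ (by omega), show n - 1 - 1 = n - 2 by omega]
    rw [show 2 + (n - 1) = n + 1 by omega,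
        mod_twice (show n ≤ n + 1 by omega) (show n + 1 < 2 * n by omega),
        show n + 1 - n = 1 by omega, if_pos (le_refl (n - 1)), Nat.sub_self, pow_zero,
        show (1:ℕ) + 1 = 2 from rfl, hQ2, mul_one]
    rw [show 2 + (n - 2) = n by omega, Nat.mod_self, Nat.zero_add, hQ1,
        if_pos (show n - 2 ≤ n - 1 by omega), show n - 1 - (n - 2) = 1 by omega, pow_one]
    have hmain : ∑ v ∈ range (n - 2),
        pellLucas ((2 + v) % n + 1) * (if v ≤ n - 1 then t ^ (n - 1 - v) else 0)
        = S1 * t := by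
      rw [hS1, Finset.sum_mul]
      refine Finset.sum_congr rfl fun v hv => ?_
      simp only [Finset.mem_range] at hv
      rw [Nat.mod_eq_of_lt (by omega), if_pos (by omega), show 2 + v + 1 = v + 3 by omega,
          show n - 1 - v = (n - 2 - v) + 1 by omega, pow_succ]
      ring
    rw [hmain]
  -- entry (n-1, n-2)
  have hE10 : Tmat n x t ⟨n - 1, by omega⟩ ⟨n - 2, by omega⟩ = S3 := by
    rw [T_bottom n x t _ _ hb1 (n - 1) (n - 2) rfl rfl,
        show n - (n - 1) = 1 by omega,
        hpop n _ (by omega)]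
    rw [if_neg (show ¬ n - 1 ≤ n - 2 by omega), mul_zero, add_zero]
    rw [hS3]
    refine Finset.sum_congr rfl fun v hv => ?_
    simp only [Finset.mem_range] at hv
    rw [Nat.mod_eq_of_lt (by omega), if_pos (by omega), show 1 + v + 1 = v + 2 by omega]
  -- entry (n-1, n-1)
  have hE11 : Tmat n x t ⟨n - 1, by omega⟩ ⟨n - 1, by omega⟩ = S3 * t + 2 := by
    rw [T_bottom n x t _ _ hb1 (n - 1) (n - 1) rfl rfl,
        show n - (n - 1) = 1 by omega,
        hpop n _ (by omega)]
    rw [show 1 + (n - 1) = n by omega, Nat.mod_self, if_pos (le_refl (n - 1)),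
        Nat.sub_self, pow_zero, Nat.zero_add, hQ1, mul_one]
    have hmain : ∑ v ∈ range (n - 1),
        pellLucas ((1 + v) % n + 1) * (if v ≤ n - 1 then t ^ (n - 1 - v) else 0)
        = S3 * t := by
      rw [hS3, Finset.sum_mul]
      refine Finset.sum_congr rfl fun v hv => ?_
      simp only [Finset.mem_range] at hv
      rw [Nat.mod_eq_of_lt (by omega), if_pos (by omega), show 1 + v + 1 = v + 2 by omega,
          show n - 1 - v = (n - 2 - v) + 1 by omega, pow_succ]
      ring
    rw [hmain]
  -- determinant of the circulant
  have hdet : (circMat n pellLucas).det = x ^ (n - 2) * (2 * S1 - 6 * S3 + 4) := by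
    have hfac : Mmat n * circMat n pellLucas * Pmat n t = Tmat n x t := by
      rw [MA_eq n hn, BP_eq n hn t (by rw [← hxdef]; exact hxt), ← hxdef]
    calc (circMat n pellLucas).det
        = (Mmat n).det * (circMat n pellLucas).det * (Pmat n t).det := by
          rw [det_Mmat, det_Pmat]; ring
      _ = (Mmat n * circMat n pellLucas * Pmat n t).det := by
          rw [Matrix.det_mul, Matrix.det_mul]
      _ = (Tmat n x t).det := by rw [hfac]
      _ = x ^ (n - 2) * (2 * S1 - 6 * S3 + 4) := by
          rw [det_Tmat n hn x t, hE00, hE01, hE10, hE11]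
          ring
  rw [hdet]
  -- split off last term of S3
  have hS3' : S3 = (∑ v ∈ range (n - 2), pellLucas (v + 2) * t ^ (n - 2 - v)) + pellLucas n := by
    rw [hS3, hpop (n - 1) _ (by omega), show n - 1 - 1 = n - 2 by omega,
        show n - 2 + 2 = n by omega, Nat.sub_self, pow_zero, mul_one]
  -- reindex the Icc sum
  have hsum : ∑ k ∈ Finset.Icc 2 (n - 1),
        (pellLucas (k + 1) - 3 * pellLucas k) * (pellLucas n - 2) ^ (n - k) * x ^ (k - 2)
      = ∑ v ∈ range (n - 2),
        (pellLucas (v + 3) - 3 * pellLucas (v + 2)) * (pellLucas n - 2) ^ (n - 2 - v) * x ^ v := by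
    refine Finset.sum_nbij' (fun k => k - 2) (fun v => v + 2) ?_ ?_ ?_ ?_ ?_
    · intro a ha
      simp only [Finset.mem_Icc] at ha
      simp only [Finset.mem_range]
      omega
    · intro a ha
      simp only [Finset.mem_range] at ha
      simp only [Finset.mem_Icc]
      omega
    · intro a ha
      simp only [Finset.mem_Icc] at ha
      show a - 2 + 2 = a
      omega
    · intro a _
      show a + 2 - 2 = a
      omega
    · intro a ha
      simp only [Finset.mem_Icc] at ha
      beta_reduce
      rw [show a - 2 + 3 = a + 1 by omega, show a - 2 + 2 = a by omega,
          show n - 2 - (a - 2) = n - a by omega]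
  rw [hsum]
  -- per-term power identity
  have hpow : ∀ v ∈ range (n - 2),
      x ^ (n - 2) * t ^ (n - 2 - v) = (pellLucas n - 2) ^ (n - 2 - v) * x ^ v := by
    intro v hv
    simp only [Finset.mem_range] at hv
    have h1 : x ^ (n - 2) = x ^ (n - 2 - v) * x ^ v := by
      rw [← pow_add]
      congr 1
      omega
    calc x ^ (n - 2) * t ^ (n - 2 - v)
        = (x * t) ^ (n - 2 - v) * x ^ v := by rw [h1]; ring
      _ = (pellLucas n - 2) ^ (n - 2 - v) * x ^ v := by rw [hxt]
  have key : ∑ v ∈ range (n - 2),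
        (pellLucas (v + 3) - 3 * pellLucas (v + 2)) * (pellLucas n - 2) ^ (n - 2 - v) * x ^ v
      = x ^ (n - 2) * S1 - 3 * (x ^ (n - 2) *
          ∑ v ∈ range (n - 2), pellLucas (v + 2) * t ^ (n - 2 - v)) := by
    rw [hS1, Finset.mul_sum, Finset.mul_sum, Finset.mul_sum, ← Finset.sum_sub_distrib]
    refine Finset.sum_congr rfl fun v hv => ?_
    have hp := hpow v hv
    linear_combination (3 * pellLucas (v + 2) - pellLucas (v + 3)) * hp
  rw [key, hS3']
  ring
end

section
/- For n ≥ 3, the n×n circulant matrix P = circ(P₁, P₂, ..., Pₙ) built from Pell numbers is invertible (has nonzero determinant over the rationals). -/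
/-!
Write `u = (P₁, …, Pₙ)`. Multiplying circulants corresponds to multiplying the polynomials
`∑ cₖ xᵏ` modulo `xⁿ - 1`, and the Pell recurrence gives
`(∑ₖ Pₖ₊₁ xᵏ)(x² + 2x - 1) ≡ (Pₙ₊₁ - 1) + Pₙ x`, so `circ u · circ g = circ (a + b x)` with
`a = Pₙ₊₁ - 1 > b = Pₙ ≥ 1`. The circulant of `a + b x` has the explicit inverse
`(aⁿ - (-b)ⁿ)⁻¹ · circ ((-b)ᵏ aⁿ⁻¹⁻ᵏ)ₖ`, and `aⁿ - (-b)ⁿ > 0` because `a > b ≥ 0`.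
-/

open Matrix

lemma circMat_eq_transpose_circulant (n : ℕ) (c : ℕ → ℚ) :
    circMat n c = (circulant fun k : Fin n => c (k + 1))ᵀ :=
  rfl

lemma circulant_mulVec_single {R ι : Type*} [NonUnitalNonAssocSemiring R] [Fintype ι]
    [DecidableEq ι] [Sub ι] (v : ι → R) (j : ι) (c : R) :
    circulant v *ᵥ Pi.single j c = fun i => v (i - j) * c := by
  ext i
  simp [mulVec_single, circulant_apply]

lemma neg_pow_lt_pow {R : Type*} [Ring R] [LinearOrder R] [IsStrictOrderedRing R] {a b : R}
    (hb : 0 ≤ b) (hab : b < a) {n : ℕ} (hn : n ≠ 0) : (-b) ^ n < a ^ n :=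
  calc (-b) ^ n ≤ |(-b) ^ n| := le_abs_self _
    _ = b ^ n := by rw [abs_pow, abs_neg, abs_of_nonneg hb]
    _ < a ^ n := pow_lt_pow_left₀ hab hb hn

section TwoTermCirculant

variable {R : Type*} [CommRing R] (n : ℕ) (a b : R)

lemma circulant_geom_mulVec_single_add_single :
    circulant (fun k : Fin (n + 1) => (-b) ^ k.val * a ^ (n - k.val)) *ᵥ
      (Pi.single 0 a + Pi.single 1 b) = Pi.single 0 (a ^ (n + 1) - (-b) ^ (n + 1)) := by
  ext i
  simp only [mulVec_add, circulant_mulVec_single, Pi.add_apply, sub_zero]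
  rcases Fin.eq_zero_or_eq_succ i with rfl | ⟨k, rfl⟩
  · simp only [Fin.coe_ofNat_eq_mod, Nat.zero_mod, pow_zero, tsub_zero, one_mul, zero_sub,
      Fin.coe_neg_one, tsub_self, mul_one, Pi.single_eq_same]
    ring
  · have hk : ((k.succ - 1 : Fin (n + 1)) : ℕ) = k := by simp [Fin.coe_sub_one, Fin.succ_ne_zero]
    rw [hk, Pi.single_eq_of_ne (Fin.succ_ne_zero k), Fin.val_succ,
      show n - k.val = n - (k.val + 1) + 1 by omega, pow_succ, pow_succ]
    ring

lemma circulant_single_add_single_mul_circulant_geom :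
    circulant (Pi.single 0 a + Pi.single 1 b : Fin (n + 1) → R) *
      circulant (fun k : Fin (n + 1) => (-b) ^ k.val * a ^ (n - k.val)) =
      scalar (Fin (n + 1)) (a ^ (n + 1) - (-b) ^ (n + 1)) := by
  rw [circulant_mul_comm, circulant_mul, circulant_geom_mulVec_single_add_single, circulant_single]

lemma isUnit_det_circulant_single_add_single (h : IsUnit (a ^ (n + 1) - (-b) ^ (n + 1))) :
    IsUnit (circulant (Pi.single 0 a + Pi.single 1 b : Fin (n + 1) → R)).det := by
  have hdet := congrArg det (circulant_single_add_single_mul_circulant_geom n a b)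
  rw [det_mul, scalar_apply, det_diagonal, Finset.prod_const, Finset.card_univ,
    Fintype.card_fin] at hdet
  exact isUnit_of_mul_isUnit_left (hdet ▸ h.pow _)

end TwoTermCirculant

@[simp] lemma pell_zero : pell 0 = 0 := rfl

@[simp] lemma pell_one : pell 1 = 1 := rfl

lemma pell_add_two (n : ℕ) : pell (n + 2) = 2 * pell (n + 1) + pell n := rfl

lemma pell_nonneg : ∀ n, 0 ≤ pell n
  | 0 => le_rfl
  | 1 => zero_le_one
  | n + 2 => by rw [pell_add_two]; linarith [pell_nonneg n, pell_nonneg (n + 1)]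

lemma one_le_pell_succ : ∀ n, 1 ≤ pell (n + 1)
  | 0 => le_rfl
  | n + 1 => by rw [pell_add_two]; linarith [pell_nonneg n, one_le_pell_succ n]

lemma circulant_pell_mul (m : ℕ) :
    circulant (fun k : Fin (m + 3) => pell (k + 1)) *
      circulant (Pi.single 0 (-1) + Pi.single 1 2 + Pi.single 2 1) =
      circulant (Pi.single 0 (pell (m + 4) - 1) + Pi.single 1 (pell (m + 3))) := by
  rw [circulant_mul]
  congr 1
  ext ⟨i, hi⟩
  simp only [mulVec_add, circulant_mulVec_single, Pi.add_apply]
  have h2 : 2 % (m + 3) = 2 := Nat.mod_eq_of_lt (by omega)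
  match i, hi with
  | 0, _ =>
    have hv1 : ((0 - 1 : Fin (m + 3)) : ℕ) = m + 2 := by
      rw [Fin.coe_sub_iff_lt.2] <;> simp
    have hv2 : ((0 - 2 : Fin (m + 3)) : ℕ) = m + 1 := by
      rw [Fin.coe_sub_iff_lt.2] <;> simp [Fin.lt_def, h2]
    simp only [Fin.zero_eta, hv1, hv2, sub_self, Fin.coe_ofNat_eq_mod, Nat.zero_mod, zero_add, pell_one, mul_neg, mul_one,
      pell_add_two (m + 2), Pi.single_eq_same, ne_eq, zero_ne_one, not_false_eq_true,
      Pi.single_eq_of_ne, add_zero]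
    ring
  | 1, _ =>
    have hv2 : ((1 - 2 : Fin (m + 3)) : ℕ) = m + 2 := by
      rw [Fin.coe_sub_iff_lt.2] <;> simp [Fin.lt_def, h2]
    simp [hv2, pell_add_two]
  | k + 2, hk =>
    have hv1 : ((⟨k + 2, hk⟩ - 1 : Fin (m + 3)) : ℕ) = k + 1 := by
      rw [Fin.coe_sub_iff_le.2] <;> simp [Fin.le_def]
    have hv2 : ((⟨k + 2, hk⟩ - 2 : Fin (m + 3)) : ℕ) = k := by
      rw [Fin.coe_sub_iff_le.2] <;> simp [Fin.le_def, h2]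
    simp only [sub_zero, pell_add_two, mul_neg, mul_one, neg_add_rev, hv1, hv2, ne_eq,
      Fin.mk_eq_zero, Nat.add_eq_zero_iff, OfNat.ofNat_ne_zero, and_false, not_false_eq_true,
      Pi.single_eq_of_ne, Fin.mk_eq_one, Nat.reduceEqDiff, add_zero]
    ring

lemma pell_lt_pell_succ_sub_one (n : ℕ) : pell (n + 2) < pell (n + 3) - 1 := by
  have := pell_add_two (n + 1)
  linarith [one_le_pell_succ n, one_le_pell_succ (n + 1)]

theorem circ_pell_invertible (n : ℕ) (hn : 3 ≤ n) : (circMat n pell).det ≠ 0 := by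
  obtain ⟨m, rfl⟩ := Nat.exists_eq_add_of_le' hn
  rw [circMat_eq_transpose_circulant, det_transpose, ← isUnit_iff_ne_zero]
  have hd : IsUnit ((pell (m + 4) - 1) ^ (m + 3) - (-pell (m + 3)) ^ (m + 3)) :=
    isUnit_iff_ne_zero.2 (sub_ne_zero.2 (neg_pow_lt_pow (pell_nonneg _)
      (pell_lt_pell_succ_sub_one (m + 1)) (by omega)).ne')
  have hW := isUnit_det_circulant_single_add_single (m + 2) _ _ hd
  rw [← circulant_pell_mul, det_mul] at hW
  exact isUnit_of_mul_isUnit_left hW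
end

section
/- Let n ≥ 5 and let ω = exp(2πi/n). For each k with 1 ≤ k ≤ n-1, the sum Σ_{r=1}^{n} Pᵣ ω^{k(r-1)} equals (1 - Pₙ₊₁ - Pₙ ω^k)/(1 - 2ω^k - ω^{2k}), where Pᵣ is the r-th Pell number (assuming 1 - 2ω^k - ω^{2k} ≠ 0). -/
lemma pell_gen_aux (x : ℂ) : ∀ m : ℕ,
    (∑ r ∈ Finset.Icc 1 m, (pell r : ℂ) * x ^ (r - 1)) * (1 - 2 * x - x ^ 2) =
      1 - (pell (m + 1) : ℂ) * x ^ m - (pell m : ℂ) * x ^ (m + 1) := by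
  intro m
  induction m with
  | zero => simp [pell]
  | succ m ih =>
    rw [Finset.sum_Icc_succ_top (by omega), add_mul, ih]
    have hrec : (pell (m + 2) : ℂ) = 2 * pell (m + 1) + pell m := by
      norm_cast
    rw [show m + 1 + 1 = m + 2 from rfl, hrec]
    push_cast
    ring

theorem pell_root_sum (n : ℕ) (hn : 5 ≤ n) (k : ℕ) (hk1 : 1 ≤ k) (hk2 : k ≤ n - 1)
    (ω : ℂ) (hω : ω = Complex.exp (2 * Real.pi * Complex.I / n))
    (hden : 1 - 2 * ω ^ k - ω ^ (2 * k) ≠ 0) :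
    ∑ r ∈ Finset.Icc 1 n, (pell r : ℂ) * ω ^ (k * (r - 1)) =
      (1 - (pell (n + 1) : ℂ) - (pell n : ℂ) * ω ^ k) / (1 - 2 * ω ^ k - ω ^ (2 * k)) := by
  have hωn : ω ^ n = 1 := by
    have := Complex.isPrimitiveRoot_exp n (by omega)
    rw [hω]
    exact this.pow_eq_one
  have hxn : (ω ^ k) ^ n = 1 := by
    rw [← pow_mul, mul_comm, pow_mul, hωn, one_pow]
  have hx1 : (ω ^ k) ^ (n + 1) = ω ^ k := by rw [pow_succ, hxn, one_mul]
  have key := pell_gen_aux (ω ^ k) n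
  rw [hxn, hx1] at key
  have hsum : ∑ r ∈ Finset.Icc 1 n, (pell r : ℂ) * ω ^ (k * (r - 1)) =
      ∑ r ∈ Finset.Icc 1 n, (pell r : ℂ) * (ω ^ k) ^ (r - 1) := by
    simp [pow_mul]
  rw [hsum, eq_div_iff hden]
  have hden2 : ω ^ (2 * k) = (ω ^ k) ^ 2 := by rw [pow_mul']
  rw [hden2] at *
  rw [key]; ring
end

section
/- Let n ≥ 5 and let ω = exp(2πi/n). For each k with 1 ≤ k ≤ n-1, the sum Σ_{r=1}^{n} Qᵣ ω^{k(r-1)} equals (2 - Qₙ₊₁ + (2 - Qₙ)ω^k)/(1 - 2ω^k - ω^{2k}), where Qᵣ is the r-th Pell-Lucas number (assuming 1 - 2ω^k - ω^{2k} ≠ 0). -/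
lemma pellLucas_key (x : ℂ) (n : ℕ) (hn : 1 ≤ n) :
    (1 - 2*x - x^2) * ∑ r ∈ Finset.Icc 1 n, (pellLucas r : ℂ) * x^(r-1) =
      2 + 2*x - (pellLucas (n+1) : ℂ) * x^n - (pellLucas n : ℂ) * x^(n+1) := by
  induction n, hn using Nat.le_induction with
  | base =>
    have h1 : (pellLucas 1 : ℂ) = 2 := by norm_num [pellLucas]
    have h2 : (pellLucas 2 : ℂ) = 6 := by norm_num [pellLucas]
    simp [h1, h2]; ring
  | succ n hn ih =>
    rw [Finset.sum_Icc_succ_top (by omega : 1 ≤ n + 1)]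
    have hrec : (pellLucas (n+2) : ℂ) = 2*(pellLucas (n+1) : ℂ) + (pellLucas n : ℂ) := by
      rw [show pellLucas (n+2) = 2*pellLucas (n+1) + pellLucas n from rfl]; push_cast; ring
    have hs : n + 1 - 1 = n := by omega
    rw [hs, mul_add, ih, show n+1+1 = n+2 from rfl, hrec]
    ring

theorem pellLucas_root_sum (n : ℕ) (hn : 5 ≤ n) (k : ℕ) (hk1 : 1 ≤ k) (hk2 : k ≤ n - 1)
    (ω : ℂ) (hω : ω = Complex.exp (2 * Real.pi * Complex.I / n))
    (hden : 1 - 2 * ω ^ k - ω ^ (2 * k) ≠ 0) :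
    ∑ r ∈ Finset.Icc 1 n, (pellLucas r : ℂ) * ω ^ (k * (r - 1)) =
      (2 - (pellLucas (n + 1) : ℂ) + (2 - (pellLucas n : ℂ)) * ω ^ k) /
        (1 - 2 * ω ^ k - ω ^ (2 * k)) := by
  have hω1 : ω ^ n = 1 := by
    rw [hω]
    exact (Complex.isPrimitiveRoot_exp n (by omega)).pow_eq_one
  have hxn : (ω ^ k) ^ n = 1 := by
    rw [← pow_mul, mul_comm, pow_mul, hω1, one_pow]
  have hxn1 : (ω ^ k) ^ (n + 1) = ω ^ k := by rw [pow_succ, hxn, one_mul]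
  have hkey := pellLucas_key (ω ^ k) n (by omega)
  rw [hxn, hxn1] at hkey
  have h2k : ω ^ (2 * k) = (ω ^ k) ^ 2 := by rw [mul_comm, pow_mul]
  rw [h2k] at hden
  simp_rw [pow_mul, show (ω ^ 2) ^ k = (ω ^ k) ^ 2 by rw [← pow_mul, mul_comm, pow_mul]]
  rw [eq_div_iff hden]
  linear_combination hkey
end
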